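/- arXiv:1503.06064 — 5 statements merged into one kernel-verified Lean document; each statement's English description precedes it below -/
import Mathlib

section
/- Let Ṽ : C(S^{n-1})⁺ → [0,∞) be a positive radial continuous valuation with Ṽ(0) = 0. Then μ_V* is an outer measure on S^{n-1}: μ_V*(∅) = 0; μ_V*(A) ≤ μ_V*(B) whenever A ⊆ B ⊆ S^{n-1}; and μ_V*(⋃_{i∈ℕ} A_i) ≤ Σ_{i∈ℕ} μ_V*(A_i) for every sequence (A_i)_{i∈ℕ} of subsets of S^{n-1}. -/
open MeasureTheory Metric Set
open scoped ENNReal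

noncomputable section

/-- The unit sphere `S^{n-1}` in `ℝ^n`. -/
abbrev Sph (n : ℕ) := Metric.sphere (0 : EuclideanSpace ℝ (Fin n)) 1

/-- The Lebesgue (rotation-invariant surface) measure `m` on the unit sphere `S^{n-1}`. -/
def sphMeasure (n : ℕ) : Measure (Sph n) :=
  (volume : Measure (EuclideanSpace ℝ (Fin n))).toSphere

/-- The self-map of the sphere `S^{n-1}` induced by a linear isometry of `ℝ^n`. -/
def rotMap {n : ℕ} (φ : EuclideanSpace ℝ (Fin n) ≃ₗᵢ[ℝ] EuclideanSpace ℝ (Fin n)) :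
    C(Sph n, Sph n) where
  toFun x := ⟨φ x, by
    have hx := x.2
    simp only [mem_sphere_iff_norm, sub_zero] at hx ⊢
    simp [φ.norm_map, hx]⟩
  continuous_toFun := by
    apply Continuous.subtype_mk
    exact φ.continuous.comp continuous_subtype_val

/-- A rotation of `S^{n-1}`: a linear isometry of `ℝ^n` with determinant `1`, i.e. the
restriction of an element of `SO(n)`. -/
def IsRotation {n : ℕ} (φ : EuclideanSpace ℝ (Fin n) ≃ₗᵢ[ℝ] EuclideanSpace ℝ (Fin n)) : Prop :=
  LinearMap.det (φ.toLinearEquiv : EuclideanSpace ℝ (Fin n) →ₗ[ℝ] EuclideanSpace ℝ (Fin n)) = 1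

/-- The outer measure `μ_{V,λ}*` associated to a valuation `V` on `C(S^{n-1})⁺`:
for open `G`, `μ_{V,λ}*(G) = sup{V(f) : f : S^{n-1} → [0,λ] continuous, supp f ⊆ G}`,
and for arbitrary `A`, `μ_{V,λ}*(A) = inf{μ_{V,λ}*(G) : G open, A ⊆ G}`. -/
def muStar {n : ℕ} (V : C(Sph n, ℝ) → ℝ) (lam : ℝ) (A : Set (Sph n)) : ℝ≥0∞ :=
  ⨅ (G : Set (Sph n)) (_ : IsOpen G) (_ : A ⊆ G),
    ⨆ (f : C(Sph n, ℝ)) (_ : ∀ x, f x ∈ Set.Icc 0 lam) (_ : tsupport ⇑f ⊆ G),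
      ENNReal.ofReal (V f)

/-! `μ_{V,λ}*` is the outer regularisation of the set function
`G ↦ sup {V(f) : f : X → [0, λ], supp f ⊆ G}` on open sets, so it is the outer measure induced
by that set function once the latter is countably subadditive. Since supports are compact, it
suffices to split `f` along a cover by two open sets `U, W`: a closed shrinking of the cover and
Urysohn's lemma give `h₁, h₂ : X → [0, 1]` supported in `U` and `W` with `h₁ ⊔ h₂ = 1` on
`supp f`, so `f = f h₁ ⊔ f h₂`, and the valuation identity together with positivity gives
`V(f) ≤ V(f h₁) + V(f h₂)`. -/

structure IsPositiveValuation {X : Type*} [TopologicalSpace X] (V : C(X, ℝ) → ℝ) : Prop where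
  nonneg : ∀ f : C(X, ℝ), 0 ≤ f → 0 ≤ V f
  sup_add_inf : ∀ f g : C(X, ℝ), 0 ≤ f → 0 ≤ g → V (f ⊔ g) + V (f ⊓ g) = V f + V g

theorem IsPositiveValuation.sup_le_add {X : Type*} [TopologicalSpace X] {V : C(X, ℝ) → ℝ}
    (hV : IsPositiveValuation V) {f g : C(X, ℝ)} (hf : 0 ≤ f) (hg : 0 ≤ g) :
    V (f ⊔ g) ≤ V f + V g := by
  have := hV.sup_add_inf f g hf hg
  have := hV.nonneg (f ⊓ g) (le_inf hf hg)
  linarith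

theorem exists_tsupport_subset_and_eq_one_or_eq_one {X : Type*} [TopologicalSpace X]
    [CompactSpace X] [T2Space X] {K U W : Set X} (hK : IsClosed K) (hU : IsOpen U)
    (hW : IsOpen W) (hKUW : K ⊆ U ∪ W) :
    ∃ h₁ h₂ : C(X, ℝ), tsupport h₁ ⊆ U ∧ tsupport h₂ ⊆ W ∧ (∀ x, h₁ x ∈ Icc (0 : ℝ) 1) ∧
      (∀ x, h₂ x ∈ Icc (0 : ℝ) 1) ∧ ∀ x ∈ K, h₁ x = 1 ∨ h₂ x = 1 := by
  obtain ⟨U', hU'o, hKU', hU'U⟩ := normal_exists_closure_subset (hK.sdiff hW) hU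
    fun x hx => (hKUW hx.1).resolve_right hx.2
  have hKW : K \ U' ⊆ W := fun x hx => by
    by_contra hxW
    exact hx.2 (hKU' ⟨hx.1, hxW⟩)
  obtain ⟨h₁, hs₁, hone₁, hIcc₁⟩ := exists_tsupport_one_of_isOpen_isClosed hU
    isClosed_closure.isCompact isClosed_closure hU'U
  obtain ⟨h₂, hs₂, hone₂, hIcc₂⟩ := exists_tsupport_one_of_isOpen_isClosed hW
    isClosed_closure.isCompact (hK.sdiff hU'o) hKW
  refine ⟨h₁, h₂, hs₁, hs₂, hIcc₁, hIcc₂, fun x hx => ?_⟩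
  by_cases hxU' : x ∈ U'
  · exact Or.inl (hone₁ (subset_closure hxU'))
  · exact Or.inr (hone₂ ⟨hx, hxU'⟩)

section OpenValue

variable {X : Type*} [TopologicalSpace X] {V : C(X, ℝ) → ℝ} {lam : ℝ}

def openValue (V : C(X, ℝ) → ℝ) (lam : ℝ) (G : Set X) : ℝ≥0∞ :=
  ⨆ (f : C(X, ℝ)) (_ : ∀ x, f x ∈ Icc 0 lam) (_ : tsupport f ⊆ G), ENNReal.ofReal (V f)

theorem ofReal_le_openValue {G : Set X} {f : C(X, ℝ)} (hf : ∀ x, f x ∈ Icc 0 lam)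
    (hfG : tsupport f ⊆ G) : ENNReal.ofReal (V f) ≤ openValue V lam G :=
  le_iSup₂_of_le f hf (le_iSup_of_le hfG le_rfl)

theorem openValue_mono {G G' : Set X} (h : G ⊆ G') : openValue V lam G ≤ openValue V lam G' :=
  iSup₂_le fun _ hf => iSup_le fun hfG => ofReal_le_openValue hf (hfG.trans h)

theorem openValue_empty (hzero : V 0 = 0) : openValue V lam ∅ = 0 := by
  refine le_antisymm (iSup₂_le fun f _ => iSup_le fun hf => ?_) zero_le
  have : f = 0 := ContinuousMap.ext fun x =>
    image_eq_zero_of_notMem_tsupport fun hx => hf hx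
  simp [this, hzero]

theorem openValue_union_le [CompactSpace X] [T2Space X] (hV : IsPositiveValuation V)
    {U W : Set X} (hU : IsOpen U) (hW : IsOpen W) :
    openValue V lam (U ∪ W) ≤ openValue V lam U + openValue V lam W := by
  refine iSup₂_le fun f hf => iSup_le fun hfUW => ?_
  obtain ⟨h₁, h₂, hs₁, hs₂, hIcc₁, hIcc₂, hone⟩ :=
    exists_tsupport_subset_and_eq_one_or_eq_one (isClosed_tsupport f) hU hW hfUW
  have hmul_Icc : ∀ h : C(X, ℝ), (∀ x, h x ∈ Icc (0 : ℝ) 1) → ∀ x, (f * h) x ∈ Icc 0 lam :=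
    fun h hh x => ⟨mul_nonneg (hf x).1 (hh x).1,
      (mul_le_of_le_one_right (hf x).1 (hh x).2).trans (hf x).2⟩
  have hsplit : f = f * h₁ ⊔ f * h₂ := by
    ext x
    by_cases hx : x ∈ tsupport f
    · rcases hone x hx with h | h <;>
        simp only [ContinuousMap.sup_apply, ContinuousMap.mul_apply, h, mul_one]
      · exact (max_eq_left (mul_le_of_le_one_right (hf x).1 (hIcc₂ x).2)).symm
      · exact (max_eq_right (mul_le_of_le_one_right (hf x).1 (hIcc₁ x).2)).symm
    · simp [image_eq_zero_of_notMem_tsupport hx]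
  have hVf : V f ≤ V (f * h₁) + V (f * h₂) :=
    calc V f = V (f * h₁ ⊔ f * h₂) := congrArg V hsplit
      _ ≤ V (f * h₁) + V (f * h₂) :=
        hV.sup_le_add (fun x => (hmul_Icc h₁ hIcc₁ x).1) (fun x => (hmul_Icc h₂ hIcc₂ x).1)
  calc ENNReal.ofReal (V f) ≤ ENNReal.ofReal (V (f * h₁) + V (f * h₂)) :=
        ENNReal.ofReal_le_ofReal hVf
    _ ≤ ENNReal.ofReal (V (f * h₁)) + ENNReal.ofReal (V (f * h₂)) := ENNReal.ofReal_add_le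
    _ ≤ openValue V lam U + openValue V lam W :=
        add_le_add
          (ofReal_le_openValue (hmul_Icc h₁ hIcc₁) (tsupport_mul_subset_right.trans hs₁))
          (ofReal_le_openValue (hmul_Icc h₂ hIcc₂) (tsupport_mul_subset_right.trans hs₂))

theorem openValue_biUnion_le [CompactSpace X] [T2Space X] {ι : Type*} [DecidableEq ι]
    (hV : IsPositiveValuation V) (hzero : V 0 = 0) {G : ι → Set X} (hG : ∀ i, IsOpen (G i))
    (t : Finset ι) : openValue V lam (⋃ i ∈ t, G i) ≤ ∑ i ∈ t, openValue V lam (G i) := by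
  induction t using Finset.induction_on with
  | empty => simp [openValue_empty hzero]
  | insert a t ha ih =>
    rw [Finset.set_biUnion_insert, Finset.sum_insert ha]
    exact (openValue_union_le hV (hG a) (isOpen_biUnion fun i _ => hG i)).trans
      (add_le_add_right ih _)

theorem openValue_iUnion_le [CompactSpace X] [T2Space X] {ι : Type*}
    (hV : IsPositiveValuation V) (hzero : V 0 = 0) {G : ι → Set X} (hG : ∀ i, IsOpen (G i)) :
    openValue V lam (⋃ i, G i) ≤ ∑' i, openValue V lam (G i) := by
  classical
  refine iSup₂_le fun f hf => iSup_le fun hfG => ?_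
  obtain ⟨t, ht⟩ := (isClosed_tsupport f).isCompact.elim_finite_subcover G hG hfG
  calc ENNReal.ofReal (V f) ≤ openValue V lam (⋃ i ∈ t, G i) := ofReal_le_openValue hf ht
    _ ≤ ∑ i ∈ t, openValue V lam (G i) := openValue_biUnion_le hV hzero hG t
    _ ≤ ∑' i, openValue V lam (G i) := ENNReal.sum_le_tsum t

end OpenValue

theorem muStar_eq_inducedOuterMeasure {n : ℕ} {V : C(Sph n, ℝ) → ℝ}
    (hV : IsPositiveValuation V) (hzero : V 0 = 0) (lam : ℝ) (A : Set (Sph n)) :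
    muStar V lam A = inducedOuterMeasure (fun G (_ : IsOpen G) => openValue V lam G)
      isOpen_empty (openValue_empty hzero) A := by
  rw [inducedOuterMeasure_eq_iInf (fun _ => isOpen_iUnion)
    (fun _ hG => openValue_iUnion_le hV hzero hG) fun _ _ _ _ h => openValue_mono h]
  rfl

theorem stmt7_general {n : ℕ} (V : C(Sph n, ℝ) → ℝ)
    (hpos : ∀ f : C(Sph n, ℝ), 0 ≤ f → 0 ≤ V f)
    (hval : ∀ f g : C(Sph n, ℝ), 0 ≤ f → 0 ≤ g →
      V (f ⊔ g) + V (f ⊓ g) = V f + V g)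
    (hzero : V 0 = 0) :
    muStar V 1 (∅ : Set (Sph n)) = 0 ∧
    (∀ A B : Set (Sph n), A ⊆ B → muStar V 1 A ≤ muStar V 1 B) ∧
    (∀ A : ℕ → Set (Sph n), muStar V 1 (⋃ i, A i) ≤ ∑' i, muStar V 1 (A i)) := by
  simp only [muStar_eq_inducedOuterMeasure ⟨hpos, hval⟩ hzero]
  exact ⟨measure_empty, fun _ _ h => measure_mono h, fun A => measure_iUnion_le A⟩

/-- for a positive radial continuous valuation `V` with `V(0)=0`,
the set function `μ_V* = μ_{V,1}*` is an outer measure on `S^{n-1}`. -/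
theorem stmt7 {n : ℕ} (hn : 2 ≤ n) (V : C(Sph n, ℝ) → ℝ)
    (hpos : ∀ f : C(Sph n, ℝ), 0 ≤ f → 0 ≤ V f)
    (hval : ∀ f g : C(Sph n, ℝ), 0 ≤ f → 0 ≤ g →
      V (f ⊔ g) + V (f ⊓ g) = V f + V g)
    (hcont : ContinuousOn V {f : C(Sph n, ℝ) | 0 ≤ f})
    (hzero : V 0 = 0) :
    muStar V 1 (∅ : Set (Sph n)) = 0 ∧
    (∀ A B : Set (Sph n), A ⊆ B → muStar V 1 A ≤ muStar V 1 B) ∧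
    (∀ A : ℕ → Set (Sph n), muStar V 1 (⋃ i, A i) ≤ ∑' i, muStar V 1 (A i)) :=
  stmt7_general V hpos hval hzero
end
end

section
/- Let Ṽ : C(S^{n-1})⁺ → [0,∞) be a positive radial continuous valuation with Ṽ(0) = 0. Then every Borel subset of S^{n-1} is Carathéodory-measurable with respect to the outer measure μ_V*; in particular, for every open set G ⊆ S^{n-1} and every A ⊆ S^{n-1}, μ_V*(A) = μ_V*(A ∩ G) + μ_V*(A ∩ G^c). Consequently the restriction μ_V of μ_V* to the Borel σ-algebra of S^{n-1} is a countably additive measure. -/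
open MeasureTheory Metric Set
open scoped ENNReal

noncomputable section

/-!
For `f, g ≥ 0` the valuation identity gives `V (f ⊔ g) ≤ V f + V g`, with equality when
`f ⊓ g = 0`. Splitting a test function on `G₁ ∪ G₂` with a bump covering subordinate to
`{G₁, G₂}` makes `μ_V*` subadditive on open sets, and compactness of supports makes it countably
subadditive, so `μ_V*` is the outer measure induced by its values on open sets. For open `G` and
`U`, a test function `f` on `U ∩ G` and a test function `g` on `U \ tsupport f` satisfy
`f ⊓ g = 0`, hence `V f + V g = V (f ⊔ g) ≤ μ_V*(U)`: this is Carathéodory's criterion for `G`,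
and the Borel sets follow.
-/

structure IsPositiveValuation_s8 {X : Type*} [TopologicalSpace X] (V : C(X, ℝ) → ℝ) : Prop where
  nonneg : ∀ f, 0 ≤ f → 0 ≤ V f
  sup_add_inf : ∀ f g, 0 ≤ f → 0 ≤ g → V (f ⊔ g) + V (f ⊓ g) = V f + V g
  map_zero : V 0 = 0

namespace IsPositiveValuation_s8

variable {X : Type*} [TopologicalSpace X] {V : C(X, ℝ) → ℝ} (hV : IsPositiveValuation_s8 V)
include hV

theorem map_sup_le {f g : C(X, ℝ)} (hf : 0 ≤ f) (hg : 0 ≤ g) : V (f ⊔ g) ≤ V f + V g := by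
  linarith [hV.sup_add_inf f g hf hg, hV.nonneg _ (le_inf hf hg)]

theorem map_sup_of_inf_eq_zero {f g : C(X, ℝ)} (hf : 0 ≤ f) (hg : 0 ≤ g) (hfg : f ⊓ g = 0) :
    V (f ⊔ g) = V f + V g := by
  simpa [hfg, hV.map_zero] using hV.sup_add_inf f g hf hg

end IsPositiveValuation_s8

namespace RadialValuation

variable {X : Type*} [TopologicalSpace X]

theorem tsupport_sup_subset {M : Type*} [Zero M] [SemilatticeSup M] (f g : X → M) :
    tsupport (f ⊔ g) ⊆ tsupport f ∪ tsupport g := by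
  rw [tsupport, tsupport, tsupport, ← closure_union]
  exact closure_mono (Function.support_sup f g)

theorem inf_eq_zero_of_disjoint_support {f g : C(X, ℝ)} (hf : 0 ≤ f) (hg : 0 ≤ g)
    (hfg : Disjoint (Function.support f) (Function.support g)) : f ⊓ g = 0 := by
  ext x
  by_cases hfx : f x = 0
  · simpa [hfx] using hg x
  · have hgx : g x = 0 := Function.notMem_support.1 (hfg.notMem_of_mem_left hfx)
    simpa [hgx] using hf x

def admissible (lam : ℝ) (G : Set X) : Set C(X, ℝ) :=
  {f | (∀ x, f x ∈ Icc 0 lam) ∧ tsupport f ⊆ G}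

variable {lam : ℝ} {G G₁ G₂ : Set X} {f g : C(X, ℝ)}

theorem zero_mem_admissible (hlam : 0 ≤ lam) : (0 : C(X, ℝ)) ∈ admissible lam G :=
  ⟨fun _ => ⟨le_rfl, hlam⟩, by simp⟩

theorem nonneg_of_mem_admissible (hf : f ∈ admissible lam G) : 0 ≤ f :=
  fun x => (hf.1 x).1

theorem admissible_mono (h : G₁ ⊆ G₂) : admissible lam G₁ ⊆ admissible lam G₂ :=
  fun _ hf => ⟨hf.1, hf.2.trans h⟩

theorem eq_zero_of_mem_admissible_empty (hf : f ∈ admissible lam ∅) : f = 0 :=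
  ContinuousMap.ext fun _ => by_contra fun hx => hf.2 (subset_tsupport _ hx)

theorem sup_mem_admissible (hf : f ∈ admissible lam G₁) (hg : g ∈ admissible lam G₂) :
    f ⊔ g ∈ admissible lam (G₁ ∪ G₂) :=
  ⟨fun x => ⟨le_sup_of_le_left (hf.1 x).1, sup_le (hf.1 x).2 (hg.1 x).2⟩,
    (tsupport_sup_subset (f : X → ℝ) g).trans (union_subset_union hf.2 hg.2)⟩

/-- A bump covering subordinate to `{G₁, G₂}` has, at each point of `tsupport f`, a member
equal to `1`; so the products of `f` with the two members have maximum `f`. -/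
theorem exists_sup_eq_of_mem_admissible_union [NormalSpace X] [ParacompactSpace X]
    (hG₁ : IsOpen G₁) (hG₂ : IsOpen G₂) (hf : f ∈ admissible lam (G₁ ∪ G₂)) :
    ∃ g₁ ∈ admissible lam G₁, ∃ g₂ ∈ admissible lam G₂, g₁ ⊔ g₂ = f := by
  have hcover : tsupport f ⊆ ⋃ b, cond b G₁ G₂ := union_eq_iUnion ▸ hf.2
  obtain ⟨F, hF⟩ := BumpCovering.exists_isSubordinate (isClosed_tsupport f) _
    (Bool.forall_bool.2 ⟨hG₂, hG₁⟩) hcover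
  have hcut_le : ∀ b x, f x * F b x ≤ f x := fun b x =>
    mul_le_of_le_one_right (hf.1 x).1 (F.le_one b x)
  have hcut : ∀ b, f * F b ∈ admissible lam (cond b G₁ G₂) := fun b =>
    ⟨fun x => ⟨mul_nonneg (hf.1 x).1 (F.nonneg b x), (hcut_le b x).trans (hf.1 x).2⟩,
      (closure_mono (Function.support_mul_subset_right _ _)).trans (hF b)⟩
  refine ⟨_, hcut true, _, hcut false, ContinuousMap.ext fun x => ?_⟩
  by_cases hx : x ∈ tsupport f
  · have h1 : F (F.ind x hx) x = 1 := F.ind_apply x hx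
    cases h : F.ind x hx <;> rw [h] at h1
    · simpa [h1] using hcut_le true x
    · simpa [h1] using hcut_le false x
  · simp [image_eq_zero_of_notMem_tsupport hx]

/-- `μ_{V,λ}*(G)` for open `G`. -/
def muOpen (V : C(X, ℝ) → ℝ) (lam : ℝ) (G : Set X) : ℝ≥0∞ :=
  ⨆ f ∈ admissible lam G, ENNReal.ofReal (V f)

variable {V : C(X, ℝ) → ℝ}

theorem le_muOpen (hf : f ∈ admissible lam G) : ENNReal.ofReal (V f) ≤ muOpen V lam G :=
  le_iSup₂_of_le f hf le_rfl

theorem muOpen_mono (h : G₁ ⊆ G₂) : muOpen V lam G₁ ≤ muOpen V lam G₂ :=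
  biSup_mono (admissible_mono h)

theorem muOpen_empty (h0 : V 0 = 0) : muOpen V lam ∅ = 0 :=
  nonpos_iff_eq_zero.1 <| iSup₂_le fun f hf => by
    rw [eq_zero_of_mem_admissible_empty hf, h0, ENNReal.ofReal_zero]

def outerMeasure (V : C(X, ℝ) → ℝ) (lam : ℝ) (h0 : V 0 = 0) : OuterMeasure X :=
  inducedOuterMeasure (fun G (_ : IsOpen G) => muOpen V lam G) isOpen_empty (muOpen_empty h0)

end RadialValuation

namespace IsPositiveValuation_s8

open RadialValuation

variable {X : Type*} [TopologicalSpace X] {V : C(X, ℝ) → ℝ} (hV : IsPositiveValuation_s8 V)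
  {lam : ℝ} {U G G₁ G₂ : Set X} {f : C(X, ℝ)}
include hV

theorem muOpen_union_le [NormalSpace X] [ParacompactSpace X] (hG₁ : IsOpen G₁)
    (hG₂ : IsOpen G₂) : muOpen V lam (G₁ ∪ G₂) ≤ muOpen V lam G₁ + muOpen V lam G₂ := by
  refine iSup₂_le fun f hf => ?_
  obtain ⟨g₁, hg₁, g₂, hg₂, rfl⟩ := exists_sup_eq_of_mem_admissible_union hG₁ hG₂ hf
  calc ENNReal.ofReal (V (g₁ ⊔ g₂))
      ≤ ENNReal.ofReal (V g₁ + V g₂) := ENNReal.ofReal_le_ofReal <|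
        hV.map_sup_le (nonneg_of_mem_admissible hg₁) (nonneg_of_mem_admissible hg₂)
    _ ≤ ENNReal.ofReal (V g₁) + ENNReal.ofReal (V g₂) := ENNReal.ofReal_add_le
    _ ≤ muOpen V lam G₁ + muOpen V lam G₂ := add_le_add (le_muOpen hg₁) (le_muOpen hg₂)

theorem muOpen_biUnion_finset_le [NormalSpace X] [ParacompactSpace X] {ι : Type*}
    {G : ι → Set X} (hG : ∀ i, IsOpen (G i)) (s : Finset ι) :
    muOpen V lam (⋃ i ∈ s, G i) ≤ ∑ i ∈ s, muOpen V lam (G i) := by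
  classical
  induction s using Finset.induction_on with
  | empty => simp [muOpen_empty hV.map_zero]
  | insert a s ha ih =>
    rw [Finset.set_biUnion_insert, Finset.sum_insert ha]
    exact (hV.muOpen_union_le (hG a) (isOpen_biUnion fun i _ => hG i)).trans
      (by gcongr; simpa only [Finset.set_biUnion_coe] using ih)

theorem muOpen_iUnion_le [CompactSpace X] [NormalSpace X] {G : ℕ → Set X}
    (hG : ∀ i, IsOpen (G i)) : muOpen V lam (⋃ i, G i) ≤ ∑' i, muOpen V lam (G i) := by
  refine iSup₂_le fun f hf => ?_
  obtain ⟨s, hs⟩ := (isClosed_tsupport f).isCompact.elim_finite_subcover G hG hf.2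
  calc ENNReal.ofReal (V f) ≤ muOpen V lam (⋃ i ∈ s, G i) := le_muOpen ⟨hf.1, hs⟩
    _ ≤ ∑ i ∈ s, muOpen V lam (G i) := hV.muOpen_biUnion_finset_le hG s
    _ ≤ ∑' i, muOpen V lam (G i) := ENNReal.sum_le_tsum s

theorem ofReal_add_muOpen_diff_tsupport_le (hlam : 0 ≤ lam) (hf : f ∈ admissible lam U) :
    ENNReal.ofReal (V f) + muOpen V lam (U \ tsupport f) ≤ muOpen V lam U := by
  rw [muOpen, ENNReal.add_biSup ⟨0, zero_mem_admissible hlam⟩]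
  refine iSup₂_le fun g hg => ?_
  have hf0 := nonneg_of_mem_admissible hf
  have hg0 := nonneg_of_mem_admissible hg
  have hfg : f ⊓ g = 0 := inf_eq_zero_of_disjoint_support hf0 hg0 <|
    Disjoint.mono (subset_tsupport _) ((subset_tsupport _).trans hg.2) disjoint_sdiff_right
  rw [← ENNReal.ofReal_add (hV.nonneg f hf0) (hV.nonneg g hg0),
    ← hV.map_sup_of_inf_eq_zero hf0 hg0 hfg]
  exact le_muOpen <|
    admissible_mono (union_subset subset_rfl sdiff_subset) (sup_mem_admissible hf hg)

variable [CompactSpace X] [NormalSpace X]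

theorem outerMeasure_apply (A : Set X) :
    outerMeasure V lam hV.map_zero A =
      ⨅ (G : Set X) (_ : IsOpen G) (_ : A ⊆ G), muOpen V lam G :=
  inducedOuterMeasure_eq_iInf (fun _ => isOpen_iUnion) (fun _ => hV.muOpen_iUnion_le)
    (fun _ _ _ _ => muOpen_mono) A

theorem outerMeasure_of_isOpen (hG : IsOpen G) :
    outerMeasure V lam hV.map_zero G = muOpen V lam G :=
  inducedOuterMeasure_eq' (fun _ => isOpen_iUnion) (fun _ => hV.muOpen_iUnion_le)
    (fun _ _ _ _ => muOpen_mono) hG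

theorem isCaratheodory_of_isOpen (hlam : 0 ≤ lam) (hG : IsOpen G) :
    MeasurableSet[(outerMeasure V lam hV.map_zero).caratheodory] G := by
  refine (inducedOuterMeasure_caratheodory (fun _ => isOpen_iUnion)
    (fun _ => hV.muOpen_iUnion_le) (fun _ _ _ _ => muOpen_mono) G).2 fun U hU => ?_
  change outerMeasure V lam hV.map_zero (U ∩ G) +
    outerMeasure V lam hV.map_zero (U \ G) ≤ outerMeasure V lam hV.map_zero U
  rw [hV.outerMeasure_of_isOpen (hU.inter hG), hV.outerMeasure_of_isOpen hU,
    muOpen, ENNReal.biSup_add ⟨0, zero_mem_admissible hlam⟩]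
  refine iSup₂_le fun f hf => ?_
  have hUf : IsOpen (U \ tsupport f) := hU.sdiff (isClosed_tsupport f)
  calc ENNReal.ofReal (V f) + outerMeasure V lam hV.map_zero (U \ G)
      ≤ ENNReal.ofReal (V f) + muOpen V lam (U \ tsupport f) := by
        rw [← hV.outerMeasure_of_isOpen hUf]
        gcongr
        exact hf.2.trans inter_subset_right
    _ ≤ muOpen V lam U :=
        hV.ofReal_add_muOpen_diff_tsupport_le hlam (admissible_mono inter_subset_left hf)

theorem borel_le_caratheodory [MeasurableSpace X] [BorelSpace X] (hlam : 0 ≤ lam) :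
    ‹MeasurableSpace X› ≤ (outerMeasure V lam hV.map_zero).caratheodory := by
  rw [BorelSpace.measurable_eq (α := X)]
  exact MeasurableSpace.generateFrom_le fun _ => hV.isCaratheodory_of_isOpen hlam

end IsPositiveValuation_s8

open RadialValuation in
theorem muStar_eq_outerMeasure {n : ℕ} {V : C(Sph n, ℝ) → ℝ}
    (hV : IsPositiveValuation_s8 V) (lam : ℝ) :
    muStar V lam = outerMeasure V lam hV.map_zero := by
  funext A
  rw [hV.outerMeasure_apply]
  simp only [muStar, muOpen, admissible, mem_ofPred_eq, iSup_and]

theorem stmt8_general {n : ℕ} (V : C(Sph n, ℝ) → ℝ)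
    (hpos : ∀ f : C(Sph n, ℝ), 0 ≤ f → 0 ≤ V f)
    (hval : ∀ f g : C(Sph n, ℝ), 0 ≤ f → 0 ≤ g →
      V (f ⊔ g) + V (f ⊓ g) = V f + V g)
    (hzero : V 0 = 0) :
    (∀ B : Set (Sph n), MeasurableSet B →
      ∀ A : Set (Sph n), muStar V 1 A = muStar V 1 (A ∩ B) + muStar V 1 (A ∩ Bᶜ)) ∧
    (∀ A : ℕ → Set (Sph n), (∀ i, MeasurableSet (A i)) →
      Pairwise (Function.onFun Disjoint A) →
      muStar V 1 (⋃ i, A i) = ∑' i, muStar V 1 (A i)) := by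
  have hV : IsPositiveValuation_s8 V := ⟨hpos, hval, hzero⟩
  have hcarath := hV.borel_le_caratheodory (X := Sph n) zero_le_one
  rw [muStar_eq_outerMeasure hV]
  refine ⟨fun B hB A => ?_, fun A hA hdisj => ?_⟩
  · simpa only [sdiff_eq] using (OuterMeasure.isCaratheodory_iff _).1 (hcarath B hB) A
  · exact OuterMeasure.iUnion_eq_of_caratheodory _ (fun i => hcarath _ (hA i)) hdisj

/-- every Borel subset of `S^{n-1}` is Carathéodory-measurable with respect
to `μ_V*`; in particular this holds for open sets, and consequently the restriction of
`μ_V*` to the Borel σ-algebra is countably additive. -/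
theorem stmt8 {n : ℕ} (hn : 2 ≤ n) (V : C(Sph n, ℝ) → ℝ)
    (hpos : ∀ f : C(Sph n, ℝ), 0 ≤ f → 0 ≤ V f)
    (hval : ∀ f g : C(Sph n, ℝ), 0 ≤ f → 0 ≤ g →
      V (f ⊔ g) + V (f ⊓ g) = V f + V g)
    (hcont : ContinuousOn V {f : C(Sph n, ℝ) | 0 ≤ f})
    (hzero : V 0 = 0) :
    (∀ B : Set (Sph n), MeasurableSet B →
      ∀ A : Set (Sph n), muStar V 1 A = muStar V 1 (A ∩ B) + muStar V 1 (A ∩ Bᶜ)) ∧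
    (∀ A : ℕ → Set (Sph n), (∀ i, MeasurableSet (A i)) →
      Pairwise (Function.onFun Disjoint A) →
      muStar V 1 (⋃ i, A i) = ∑' i, muStar V 1 (A i)) :=
  stmt8_general V hpos hval hzero
end
end

section
/- Let Ṽ : C(S^{n-1})⁺ → [0,∞) be a positive, rotation invariant, radial continuous valuation with Ṽ(0) = 0. Then the outer measure μ_V* is finite on the whole sphere: μ_V*(S^{n-1}) < ∞. -/
open MeasureTheory Metric Set
open scoped ENNReal

noncomputable section

/-!
A continuous valuation is bounded near each constant function `a`, and the valuation identity
`V f = V (f ⊔ b) + V (f ⊓ b) - V b` transfers boundedness from the order interval `[0, b]` to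
`[0, a + δ]` as soon as `[b, a + δ]` lies in such a neighbourhood of `a`. A continuous induction on
the level then bounds `V` on `[0, 1]`, which bounds every `V f` entering the definition of `μ_V*`.
-/

open Bornology
open scoped Pointwise

theorem Antitone.forall_of_exists_step {P : ℝ → Prop} (hP : Antitone P) {a₀ : ℝ} (h₀ : P a₀)
    (hstep : ∀ a ≥ a₀, ∃ δ > 0, P (a - δ) → P (a + δ)) (a : ℝ) : P a := by
  by_contra ha
  set S := {x | ¬P x}
  have hne : S.Nonempty := ⟨a, ha⟩
  have hlow : a₀ ∈ lowerBounds S := fun x hx => le_of_not_gt fun hlt => hx (hP hlt.le h₀)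
  obtain ⟨δ, hδ, hs⟩ := hstep (sInf S) (le_csInf hne hlow)
  have hbelow : P (sInf S - δ) := by_contra fun h => (csInf_le ⟨a₀, hlow⟩ h).not_gt (by linarith)
  obtain ⟨x, hxS, hx⟩ := exists_lt_of_csInf_lt hne (by linarith : sInf S < sInf S + δ)
  exact hxS (hP hx.le (hs hbelow))

theorem ContinuousWithinAt.exists_isBounded_image_inter_ball {E F : Type*} [PseudoMetricSpace E]
    [PseudoMetricSpace F] {V : E → F} {s : Set E} {x : E} (h : ContinuousWithinAt V s x) :
    ∃ δ > 0, IsBounded (V '' (s ∩ ball x δ)) := by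
  obtain ⟨δ, hδ, hV⟩ := Metric.continuousWithinAt_iff.1 h 1 one_pos
  exact ⟨δ, hδ, isBounded_ball.subset <| image_subset_iff.2 fun y hy => hV hy.1 hy.2⟩

theorem isBounded_image_Icc_of_valuation {α : Type*} [Lattice α] [Zero α] {V : α → ℝ}
    (hval : ∀ f g : α, 0 ≤ f → 0 ≤ g → V (f ⊔ g) + V (f ⊓ g) = V f + V g)
    {u w : α} (hu : 0 ≤ u) (huw : u ≤ w) (h₁ : IsBounded (V '' Icc 0 u))
    (h₂ : IsBounded (V '' Icc u w)) : IsBounded (V '' Icc 0 w) := by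
  refine (isBounded_sub (isBounded_add h₂ h₁) h₂).subset ?_
  rintro _ ⟨f, ⟨hf, hfw⟩, rfl⟩
  exact ⟨_, ⟨_, mem_image_of_mem V ⟨le_sup_right, sup_le hfw huw⟩,
    _, mem_image_of_mem V ⟨le_inf hf hu, inf_le_right⟩, rfl⟩,
    _, mem_image_of_mem V ⟨le_rfl, huw⟩, by linarith [hval f u hf hu]⟩

namespace ContinuousMap

variable {X : Type*} [TopologicalSpace X]

theorem Icc_const_subset_closedBall [CompactSpace X] (a : ℝ) {r : ℝ} (hr : 0 ≤ r) :
    Icc (const X (a - r)) (const X (a + r)) ⊆ closedBall (const X a) r := by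
  rintro f ⟨hl, hu⟩
  rw [mem_closedBall, ContinuousMap.dist_le hr]
  intro x
  have hlx : a - r ≤ f x := hl x
  have hux : f x ≤ a + r := hu x
  rw [const_apply, Real.dist_eq, abs_sub_le_iff]
  constructor <;> linarith

theorem isBounded_image_Icc_zero_const_zero (V : C(X, ℝ) → ℝ) :
    IsBounded (V '' Icc 0 (const X 0)) :=
  ((subsingleton_Icc_of_ge fun _ => le_rfl).image V).finite.isBounded

theorem isBounded_image_Icc_const_of_valuation [CompactSpace X] {V : C(X, ℝ) → ℝ}
    (hval : ∀ f g : C(X, ℝ), 0 ≤ f → 0 ≤ g → V (f ⊔ g) + V (f ⊓ g) = V f + V g)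
    (hcont : ContinuousOn V {f : C(X, ℝ) | 0 ≤ f}) (c : ℝ) :
    IsBounded (V '' Icc 0 (const X c)) := by
  refine Antitone.forall_of_exists_step (P := fun c => IsBounded (V '' Icc 0 (const X c)))
    (fun a b hab h => h.subset (image_mono (Icc_subset_Icc_right fun _ => hab)))
    (isBounded_image_Icc_zero_const_zero V) (fun a ha => ?_) c
  obtain ⟨δ, hδ, hnear⟩ :=
    (hcont (const X a) fun _ => ha).exists_isBounded_image_inter_ball
  refine ⟨δ / 2, half_pos hδ, fun hprev => ?_⟩
  set b := max (a - δ / 2) 0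
  have hb : IsBounded (V '' Icc 0 (const X b)) := by
    rcases max_cases (a - δ / 2) 0 with ⟨h, _⟩ | ⟨h, _⟩ <;> simp only [b, h]
    exacts [hprev, isBounded_image_Icc_zero_const_zero V]
  have hb0 : 0 ≤ const X b := fun _ => le_max_right _ _
  have hab : const X (a - δ / 2) ≤ const X b := fun _ => le_max_left _ _
  have hba : const X b ≤ const X (a + δ / 2) := fun _ =>
    show b ≤ a + δ / 2 from max_le (by linarith) (by linarith)
  refine isBounded_image_Icc_of_valuation hval hb0 hba hb (hnear.subset (image_mono ?_))
  intro f hf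
  exact ⟨hb0.trans hf.1, closedBall_subset_ball (half_lt_self hδ) <|
    Icc_const_subset_closedBall a (half_pos hδ).le ⟨hab.trans hf.1, hf.2⟩⟩

end ContinuousMap

theorem muStar_le_ofReal {n : ℕ} {V : C(Sph n, ℝ) → ℝ} {lam M : ℝ} {A : Set (Sph n)}
    (hM : ∀ f ∈ Icc 0 (ContinuousMap.const (Sph n) lam), V f ≤ M) :
    muStar V lam A ≤ ENNReal.ofReal M :=
  (iInf₂_le univ isOpen_univ).trans <| (iInf_le _ (subset_univ A)).trans <|
    iSup₂_le fun f hf => iSup_le fun _ =>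
      ENNReal.ofReal_le_ofReal (hM f ⟨fun x => (hf x).1, fun x => (hf x).2⟩)

theorem stmt9_general {n : ℕ} (V : C(Sph n, ℝ) → ℝ)
    (hval : ∀ f g : C(Sph n, ℝ), 0 ≤ f → 0 ≤ g →
      V (f ⊔ g) + V (f ⊓ g) = V f + V g)
    (hcont : ContinuousOn V {f : C(Sph n, ℝ) | 0 ≤ f}) :
    muStar V 1 (Set.univ : Set (Sph n)) < ⊤ := by
  obtain ⟨M, hM⟩ := (ContinuousMap.isBounded_image_Icc_const_of_valuation hval hcont 1).bddAbove
  exact (muStar_le_ofReal fun f hf => hM (mem_image_of_mem V hf)).trans_lt ENNReal.ofReal_lt_top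

/-- for a positive, rotation invariant, radial continuous valuation `V`
with `V(0)=0`, the outer measure `μ_V*` is finite on the whole sphere. -/
theorem stmt9 {n : ℕ} (hn : 2 ≤ n) (V : C(Sph n, ℝ) → ℝ)
    (hpos : ∀ f : C(Sph n, ℝ), 0 ≤ f → 0 ≤ V f)
    (hval : ∀ f g : C(Sph n, ℝ), 0 ≤ f → 0 ≤ g →
      V (f ⊔ g) + V (f ⊓ g) = V f + V g)
    (hcont : ContinuousOn V {f : C(Sph n, ℝ) | 0 ≤ f})
    (hrot : ∀ φ : EuclideanSpace ℝ (Fin n) ≃ₗᵢ[ℝ] EuclideanSpace ℝ (Fin n), IsRotation φ →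
      ∀ f : C(Sph n, ℝ), 0 ≤ f → V (f.comp (rotMap φ)) = V f)
    (hzero : V 0 = 0) :
    muStar V 1 (Set.univ : Set (Sph n)) < ⊤ :=
  stmt9_general V hval hcont
end
end

section
/- Let Ṽ : C(S^{n-1})⁺ → [0,∞) be a positive, rotation invariant, radial continuous valuation with Ṽ(0) = 0, let λ > 0, and let ζ_λ be defined on compact subsets of S^{n-1} by ζ_λ(K) = inf{Ṽ(f) : f : S^{n-1} → [0,λ] continuous, f = λ on K}. Then ζ_λ is a content: it is nonnegative and finite (ζ_λ(K) ≤ Ṽ(λ·𝟙) < ∞ for all compact K); monotone (K₁ ⊆ K₂ implies ζ_λ(K₁) ≤ ζ_λ(K₂)); subadditive (ζ_λ(K₁ ∪ K₂) ≤ ζ_λ(K₁) + ζ_λ(K₂) for all compacts K₁, K₂); and additive on disjoint compact sets (K₁ ∩ K₂ = ∅ implies ζ_λ(K₁ ∪ K₂) = ζ_λ(K₁) + ζ_λ(K₂)). -/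
open MeasureTheory Metric Set
open scoped ENNReal

noncomputable section

/-- The content `ζ_λ` associated to a valuation `V` on `C(S^{n-1})⁺`:
`ζ_λ(K) = inf{V(f) : f : S^{n-1} → [0,λ] continuous, f = λ on K}`. -/
def zeta {n : ℕ} (V : C(Sph n, ℝ) → ℝ) (lam : ℝ) (K : Set (Sph n)) : ℝ :=
  sInf (V '' {f : C(Sph n, ℝ) | (∀ x, f x ∈ Set.Icc 0 lam) ∧ ∀ x ∈ K, f x = lam})

/-!
ζ_λ(K) is an infimum of `V` over the functions admissible for `K`, so nonnegativity, the bound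
by `V(λ𝟙)` and monotonicity are immediate, and subadditivity follows from
`V(f₁ ⊔ f₂) ≤ V f₁ + V f₂`, as `f₁ ⊔ f₂` is admissible for `K₁ ∪ K₂`.

For additivity, let `f` be admissible for `K₁ ∪ K₂` and let `u` be a Urysohn function, `0` on `K₁`
and `1` on `K₂`. If `w ≤ f` vanishes on a level set `{u = m}`, cutting it along that level set
writes `w = p ⊔ q` with `p ⊓ q = 0` and `p`, `q` admissible for `K₁`, `K₂`, so
`V p + V q = V w`. We take `w = f ⊓ h` with `h = λ` except near `{u = m}`, where it dips to `0`.
Among `N` such dips `h₀, …, h_{N-1}` at well separated levels, the valuation identity telescopes to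
`∑ₖ (V(f ⊓ hₖ) - V f) = V(f ⊓ h₀ ⊓ ⋯ ⊓ h_{N-1}) - V f ≤ C`, where `C` bounds `V` on functions with
values in `[0, λ]`, so one dip costs at most `C / N`. The bound `C` exists since `V` is bounded near
the compact set of constants in `[0, λ]`, and the valuation identity with the constants
`λ j / k` bounds `V g` by the sum of `k` such local bounds.
-/

theorem IsCompact.exists_forall_le_of_continuousOn {α : Type*} [PseudoMetricSpace α]
    {f : α → ℝ} {s k : Set α} (hk : IsCompact k) (hks : k ⊆ s) (hf : ContinuousOn f s) :
    ∃ δ > 0, ∃ M, ∀ x ∈ s, ∀ y ∈ k, dist x y < δ → f x ≤ M := by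
  obtain ⟨M, hM⟩ := hk.bddAbove_image (hf.mono hks)
  obtain ⟨u, hu, hsu⟩ := continuousOn_iff'.1 hf (Iio (M + 1)) isOpen_Iio
  have hku : k ⊆ u := fun y hy =>
    (hsu.subset ⟨(hM (mem_image_of_mem f hy)).trans_lt (lt_add_one M), hks hy⟩).1
  obtain ⟨δ, hδ, hδu⟩ := hk.exists_thickening_subset_open hu hku
  refine ⟨δ, hδ, M + 1, fun x hx y hy hxy => ?_⟩
  have hxu : x ∈ u := hδu (Metric.mem_thickening_iff.2 ⟨y, hy, hxy⟩)
  exact (hsu.superset ⟨hxu, hx⟩).1.le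

section Valuation

variable {X : Type*} [TopologicalSpace X]

theorem valuation_le_succ_mul_of_mem_Icc {V : C(X, ℝ) → ℝ}
    (hpos : ∀ f : C(X, ℝ), 0 ≤ f → 0 ≤ V f)
    (hval : ∀ f g : C(X, ℝ), 0 ≤ f → 0 ≤ g → V (f ⊔ g) + V (f ⊓ g) = V f + V g)
    {lam s M : ℝ} (hs : 0 ≤ s)
    (hM : ∀ a ∈ Icc 0 lam, ∀ g : C(X, ℝ), (∀ x, g x ∈ Icc a (a + s)) → V g ≤ M) :
    ∀ (j : ℕ) (a : ℝ), 0 ≤ a → a + j * s ≤ lam →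
      ∀ g : C(X, ℝ), (∀ x, g x ∈ Icc a (a + j * s)) → V g ≤ (j + 1) * M := by
  intro j
  induction j with
  | zero =>
    intro a ha hal g hg
    simp only [CharP.cast_eq_zero, zero_mul, add_zero, zero_add, one_mul] at hal hg ⊢
    exact hM a ⟨ha, hal⟩ g fun x => ⟨(hg x).1, (hg x).2.trans (by linarith)⟩
  | succ j ih =>
    intro a ha hal g hg
    push_cast at hal hg ⊢
    have hjs : 0 ≤ (j : ℝ) * s := by positivity
    set c := ContinuousMap.const X (a + s)
    have hg0 : 0 ≤ g := fun x => ha.trans (hg x).1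
    have hc0 : 0 ≤ c := fun _ => show (0 : ℝ) ≤ a + s by positivity
    have hsup : V (g ⊔ c) ≤ (j + 1) * M := ih (a + s) (by positivity) (by linarith) _ fun x =>
      show max (g x) (a + s) ∈ _ from
        ⟨le_max_right _ _, max_le (by linarith [(hg x).2]) (by linarith)⟩
    have hinf : V (g ⊓ c) ≤ M := hM a ⟨ha, by linarith⟩ _ fun x =>
      show min (g x) (a + s) ∈ _ from ⟨le_min (hg x).1 (by linarith), min_le_right _ _⟩
    linarith [hval g c hg0 hc0, hpos c hc0]

variable [CompactSpace X]

theorem exists_forall_valuation_le_of_mem_Icc {V : C(X, ℝ) → ℝ}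
    (hpos : ∀ f : C(X, ℝ), 0 ≤ f → 0 ≤ V f)
    (hval : ∀ f g : C(X, ℝ), 0 ≤ f → 0 ≤ g → V (f ⊔ g) + V (f ⊓ g) = V f + V g)
    (hcont : ContinuousOn V {f : C(X, ℝ) | 0 ≤ f}) {lam : ℝ} (hlam : 0 ≤ lam) :
    ∃ C, ∀ g : C(X, ℝ), (∀ x, g x ∈ Icc 0 lam) → V g ≤ C := by
  have hconsts : ContinuousMap.const X '' Icc 0 lam ⊆ {f : C(X, ℝ) | 0 ≤ f} := by
    rintro _ ⟨t, ht, rfl⟩ x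
    exact ht.1
  obtain ⟨δ, hδ, M, hM⟩ := (isCompact_Icc.image
    ContinuousMap.continuous_const').exists_forall_le_of_continuousOn hconsts hcont
  obtain ⟨k, hk⟩ := exists_nat_gt (lam / δ)
  have hk0 : (0 : ℝ) < k := (div_nonneg hlam hδ.le).trans_lt hk
  have hstep : lam / k < δ := by rwa [div_lt_iff₀ hk0, mul_comm, ← div_lt_iff₀ hδ]
  refine ⟨(k + 1) * M, fun g hg => ?_⟩
  have hlam_eq : 0 + k * (lam / k) = lam := by field_simp; ring
  refine valuation_le_succ_mul_of_mem_Icc (lam := lam) hpos hval (div_nonneg hlam hk0.le) ?_ k 0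
    le_rfl hlam_eq.le g (by rwa [hlam_eq])
  intro a ha f hf
  refine hM f (fun x => ha.1.trans (hf x).1) _ (mem_image_of_mem _ ha) (lt_of_le_of_lt ?_ hstep)
  refine (ContinuousMap.dist_le (div_nonneg hlam hk0.le)).2 fun x => ?_
  rw [ContinuousMap.const_apply, Real.dist_eq, abs_le]
  constructor <;> linarith [(hf x).1, (hf x).2, div_nonneg hlam hk0.le]

end Valuation

section Pigeonhole

variable {X : Type*} [TopologicalSpace X]

def iterInf (f : C(X, ℝ)) (h : ℕ → C(X, ℝ)) : ℕ → C(X, ℝ)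
  | 0 => f
  | k + 1 => iterInf f h k ⊓ h k

variable {f : C(X, ℝ)} {h : ℕ → C(X, ℝ)}

theorem iterInf_nonneg (hf : 0 ≤ f) (hh : ∀ i, 0 ≤ h i) : ∀ k, 0 ≤ iterInf f h k
  | 0 => hf
  | k + 1 => le_inf (iterInf_nonneg hf hh k) (hh k)

theorem iterInf_le : ∀ k, iterInf f h k ≤ f
  | 0 => le_rfl
  | k + 1 => inf_le_left.trans (iterInf_le k)

theorem iterInf_apply_eq_or_le (hcover : ∀ i j, i ≠ j → ∀ x, f x ≤ h i x ∨ f x ≤ h j x)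
    (x : X) : ∀ k i, k ≤ i → iterInf f h k x = f x ∨ f x ≤ h i x
  | 0, _, _ => Or.inl rfl
  | k + 1, i, hki => by
    rcases iterInf_apply_eq_or_le hcover x k i (by omega) with hk | hi
    · rcases hcover k i (by omega) x with hfk | hfi
      · exact Or.inl (by simp only [iterInf, ContinuousMap.inf_apply, hk, min_eq_left hfk])
      · exact Or.inr hfi
    · exact Or.inr hi

theorem valuation_iterInf_add {V : C(X, ℝ) → ℝ}
    (hval : ∀ f g : C(X, ℝ), 0 ≤ f → 0 ≤ g → V (f ⊔ g) + V (f ⊓ g) = V f + V g)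
    (hf : 0 ≤ f) (hh : ∀ i, 0 ≤ h i)
    (hcover : ∀ i j, i ≠ j → ∀ x, f x ≤ h i x ∨ f x ≤ h j x) :
    ∀ N : ℕ, V (iterInf f h N) + N * V f = V f + ∑ k ∈ Finset.range N, V (f ⊓ h k)
  | 0 => by simp [iterInf]
  | k + 1 => by
    have hsup : iterInf f h k ⊔ f ⊓ h k = f := by
      ext x
      rcases iterInf_apply_eq_or_le hcover x k k le_rfl with hk | hk
      · simp [hk]
      · simpa [min_eq_left hk] using iterInf_le k x
    have hinf : iterInf f h k ⊓ (f ⊓ h k) = iterInf f h (k + 1) := by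
      rw [iterInf, ← inf_assoc, inf_eq_left.2 (iterInf_le k)]
    have hstep := hval _ _ (iterInf_nonneg hf hh k) (le_inf hf (hh k))
    rw [hsup, hinf] at hstep
    rw [Finset.sum_range_succ]
    push_cast
    linarith [valuation_iterInf_add hval hf hh hcover k]

theorem exists_valuation_inf_le {V : C(X, ℝ) → ℝ}
    (hpos : ∀ f : C(X, ℝ), 0 ≤ f → 0 ≤ V f)
    (hval : ∀ f g : C(X, ℝ), 0 ≤ f → 0 ≤ g → V (f ⊔ g) + V (f ⊓ g) = V f + V g)
    (hf : 0 ≤ f) (hh : ∀ i, 0 ≤ h i)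
    (hcover : ∀ i j, i ≠ j → ∀ x, f x ≤ h i x ∨ f x ≤ h j x)
    {C : ℝ} (hC : ∀ g, 0 ≤ g → g ≤ f → V g ≤ C) {N : ℕ} (hN : 0 < N) :
    ∃ k < N, V (f ⊓ h k) ≤ V f + C / N := by
  have hN' : (0 : ℝ) < N := by exact_mod_cast hN
  have hsum : ∑ k ∈ Finset.range N, V (f ⊓ h k) ≤ ∑ _k ∈ Finset.range N, (V f + C / N) := by
    rw [Finset.sum_const, Finset.card_range, nsmul_eq_mul, mul_add, mul_div_cancel₀ _ hN'.ne']
    linarith [valuation_iterInf_add hval hf hh hcover N, hpos f hf,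
      hC _ (iterInf_nonneg hf hh N) (iterInf_le N)]
  obtain ⟨k, hk, hle⟩ := Finset.exists_le_of_sum_le (Finset.nonempty_range_iff.2 hN.ne') hsum
  exact ⟨k, Finset.mem_range.1 hk, hle⟩

end Pigeonhole

def notch (c ρ : ℝ) : C(ℝ, ℝ) where
  toFun s := min 1 (|s - c| / ρ)
  continuous_toFun := by fun_prop

section Notch

variable {c ρ : ℝ}

theorem notch_apply (s : ℝ) : notch c ρ s = min 1 (|s - c| / ρ) := rfl

theorem notch_nonneg (hρ : 0 ≤ ρ) (s : ℝ) : 0 ≤ notch c ρ s :=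
  le_min zero_le_one (by positivity)

theorem notch_self : notch c ρ c = 0 := by simp [notch_apply]

theorem notch_eq_one (hρ : 0 < ρ) {s : ℝ} (hs : ρ ≤ |s - c|) : notch c ρ s = 1 :=
  min_eq_left ((one_le_div hρ).2 hs)

theorem notch_eq_one_or (hρ : 0 < ρ) {c' : ℝ} (hc : 2 * ρ ≤ |c - c'|) (s : ℝ) :
    notch c ρ s = 1 ∨ notch c' ρ s = 1 := by
  by_contra! hne
  have h₁ : |s - c| < ρ := not_le.1 fun hs => hne.1 (notch_eq_one hρ hs)
  have h₂ : |s - c'| < ρ := not_le.1 fun hs => hne.2 (notch_eq_one hρ hs)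
  have := abs_sub_le c s c'
  rw [abs_sub_comm c s] at this
  linarith

end Notch

section Split

variable {X : Type*} [TopologicalSpace X]

theorem exists_valuation_add_eq_of_eq_zero_on_level {V : C(X, ℝ) → ℝ}
    (hval : ∀ f g : C(X, ℝ), 0 ≤ f → 0 ≤ g → V (f ⊔ g) + V (f ⊓ g) = V f + V g)
    (hzero : V 0 = 0) {w u : C(X, ℝ)} (hw : ∀ x, 0 ≤ w x) {m : ℝ}
    (hwm : ∀ x, u x = m → w x = 0) :
    ∃ p q : C(X, ℝ), (∀ x, p x = if u x ≤ m then w x else 0) ∧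
      (∀ x, q x = if u x ≤ m then 0 else w x) ∧ V p + V q = V w := by
  let p : C(X, ℝ) := ⟨fun x => if u x ≤ m then w x else 0, w.continuous.if_le continuous_const
    u.continuous continuous_const hwm⟩
  let q : C(X, ℝ) := ⟨fun x => if u x ≤ m then 0 else w x, continuous_const.if_le w.continuous
    u.continuous continuous_const fun x hx => (hwm x hx).symm⟩
  have hp : 0 ≤ p := fun x => show 0 ≤ ite _ _ _ by split_ifs <;> simp [hw x]
  have hq : 0 ≤ q := fun x => show 0 ≤ ite _ _ _ by split_ifs <;> simp [hw x]
  have hsup : p ⊔ q = w := by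
    ext x
    change max (ite _ _ _) (ite _ _ _) = _
    split_ifs <;> simp [hw x]
  have hinf : p ⊓ q = 0 := by
    ext x
    change min (ite _ _ _) (ite _ _ _) = _
    split_ifs <;> simp [hw x]
  have h := hval p q hp hq
  rw [hsup, hinf, hzero] at h
  exact ⟨p, q, fun _ => rfl, fun _ => rfl, by linarith⟩

theorem exists_valuation_inf_notch_le {V : C(X, ℝ) → ℝ}
    (hpos : ∀ f : C(X, ℝ), 0 ≤ f → 0 ≤ V f)
    (hval : ∀ f g : C(X, ℝ), 0 ≤ f → 0 ≤ g → V (f ⊔ g) + V (f ⊓ g) = V f + V g)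
    {lam C : ℝ} (hlam : 0 ≤ lam) (hC : ∀ g : C(X, ℝ), (∀ x, g x ∈ Icc 0 lam) → V g ≤ C)
    {f : C(X, ℝ)} (hf : ∀ x, f x ∈ Icc 0 lam) (u : C(X, ℝ)) {ε : ℝ} (hε : 0 < ε) :
    ∃ m ρ : ℝ, 0 < ρ ∧ ρ ≤ m ∧ m + ρ ≤ 1 ∧ V (f ⊓ lam • (notch m ρ).comp u) ≤ V f + ε := by
  have hf0 : 0 ≤ f := fun x => (hf x).1
  obtain ⟨N, hN⟩ := exists_nat_gt (C / ε)
  have hC0 : 0 ≤ C := (hpos f hf0).trans (hC f hf)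
  have hN0 : (0 : ℝ) < N := (div_nonneg hC0 hε.le).trans_lt hN
  -- the centres `(2 i + 1) ρ`, `i < N`, are `2ρ` apart and at distance `≥ ρ` from `0` and `1`
  set ρ : ℝ := 1 / (2 * N + 1)
  have hρ : 0 < ρ := by positivity
  set h : ℕ → C(X, ℝ) := fun i => lam • (notch ((2 * i + 1) * ρ) ρ).comp u
  have hh : ∀ i, 0 ≤ h i := fun i x => mul_nonneg hlam (notch_nonneg hρ.le _)
  have hcover : ∀ i j, i ≠ j → ∀ x, f x ≤ h i x ∨ f x ≤ h j x := by
    intro i j hij x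
    have hsep : 2 * ρ ≤ |(2 * i + 1) * ρ - (2 * j + 1) * ρ| := by
      rw [show (2 * i + 1) * ρ - (2 * j + 1) * ρ = 2 * ρ * ((i : ℝ) - j) by ring, abs_mul,
        abs_of_pos (by positivity)]
      refine le_mul_of_one_le_right (by positivity) ?_
      exact_mod_cast Int.one_le_abs (sub_ne_zero.2 (Nat.cast_injective.ne hij) : (i : ℤ) - j ≠ 0)
    rcases notch_eq_one_or hρ hsep (u x) with h1 | h1
    · exact Or.inl (by simp [h, h1, (hf x).2])
    · exact Or.inr (by simp [h, h1, (hf x).2])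
  obtain ⟨k, hk, hle⟩ := exists_valuation_inf_le hpos hval hf0 hh hcover
    (fun g hg hgf => hC g fun x => ⟨hg x, (hgf x).trans (hf x).2⟩) (Nat.cast_pos.1 hN0)
  have hkN : (k : ℝ) + 1 ≤ N := by exact_mod_cast hk
  refine ⟨(2 * k + 1) * ρ, ρ, hρ,
    le_mul_of_one_le_left hρ.le (le_add_of_nonneg_left (by positivity)), ?_, ?_⟩
  · rw [show (2 * k + 1) * ρ + ρ = (2 * k + 2) / (2 * N + 1) by ring, div_le_one (by positivity)]
    linarith
  · have hCN : C / N ≤ ε := by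
      rw [div_le_iff₀ hN0]
      rw [div_lt_iff₀ hε] at hN
      linarith
    linarith

end Split

section Admissible

variable {X : Type*} [TopologicalSpace X]

def admissible (lam : ℝ) (K : Set X) : Set C(X, ℝ) :=
  {f | (∀ x, f x ∈ Icc 0 lam) ∧ ∀ x ∈ K, f x = lam}

variable {lam : ℝ} {K K₁ K₂ : Set X} {f g : C(X, ℝ)}

theorem nonneg_of_mem_admissible (hf : f ∈ admissible lam K) : 0 ≤ f := fun x => (hf.1 x).1

theorem const_mem_admissible (hlam : 0 ≤ lam) : ContinuousMap.const X lam ∈ admissible lam K :=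
  ⟨fun _ => ⟨hlam, le_rfl⟩, fun _ _ => rfl⟩

theorem admissible_anti (h : K₁ ⊆ K₂) : admissible lam K₂ ⊆ admissible lam K₁ :=
  fun _ hf => ⟨hf.1, fun x hx => hf.2 x (h hx)⟩

theorem sup_mem_admissible_union (hf : f ∈ admissible lam K₁) (hg : g ∈ admissible lam K₂) :
    f ⊔ g ∈ admissible lam (K₁ ∪ K₂) := by
  refine ⟨fun x => ⟨le_sup_of_le_left (hf.1 x).1, sup_le (hf.1 x).2 (hg.1 x).2⟩, ?_⟩
  rintro x (hx | hx)
  · exact (congrArg (max · (g x)) (hf.2 x hx)).trans (max_eq_left (hg.1 x).2)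
  · exact (congrArg (max (f x)) (hg.2 x hx)).trans (max_eq_right (hf.1 x).2)

theorem exists_admissible_split [NormalSpace X] {V : C(X, ℝ) → ℝ}
    (hpos : ∀ f : C(X, ℝ), 0 ≤ f → 0 ≤ V f)
    (hval : ∀ f g : C(X, ℝ), 0 ≤ f → 0 ≤ g → V (f ⊔ g) + V (f ⊓ g) = V f + V g)
    (hzero : V 0 = 0) {C : ℝ} (hlam : 0 ≤ lam)
    (hC : ∀ g : C(X, ℝ), (∀ x, g x ∈ Icc 0 lam) → V g ≤ C)
    (hK₁ : IsClosed K₁) (hK₂ : IsClosed K₂) (hd : Disjoint K₁ K₂)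
    (hf : f ∈ admissible lam (K₁ ∪ K₂)) {ε : ℝ} (hε : 0 < ε) :
    ∃ p ∈ admissible lam K₁, ∃ q ∈ admissible lam K₂, V p + V q ≤ V f + ε := by
  obtain ⟨u, hu₁, hu₂, -⟩ := exists_continuous_zero_one_of_isClosed hK₁ hK₂ hd
  obtain ⟨m, ρ, hρ, hρm, hmρ, hcheap⟩ :=
    exists_valuation_inf_notch_le hpos hval hlam hC hf.1 u hε
  set w := f ⊓ lam • (notch m ρ).comp u
  have hw_apply : ∀ x, w x = min (f x) (lam * notch m ρ (u x)) := fun _ => rfl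
  have hw : ∀ x, w x ∈ Icc 0 lam := fun x => by
    rw [hw_apply]
    exact ⟨le_min (hf.1 x).1 (mul_nonneg hlam (notch_nonneg hρ.le _)),
      (min_le_left _ _).trans (hf.1 x).2⟩
  have hw_eq : ∀ x ∈ K₁ ∪ K₂, ρ ≤ |u x - m| → w x = lam := fun x hx hux => by
    rw [hw_apply, notch_eq_one hρ hux, mul_one, hf.2 x hx, min_self]
  obtain ⟨p, q, hp, hq, hpq⟩ := exists_valuation_add_eq_of_eq_zero_on_level hval hzero
    (u := u) (m := m) (fun x => (hw x).1) fun x hx => by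
      rw [hw_apply, hx, notch_self, mul_zero, min_eq_right (hf.1 x).1]
  have hpq_mem : ∀ x, (if u x ≤ m then w x else 0) ∈ Icc 0 lam ∧
      (if u x ≤ m then 0 else w x) ∈ Icc 0 lam := fun x => by
    split_ifs
    exacts [⟨hw x, le_rfl, hlam⟩, ⟨⟨le_rfl, hlam⟩, hw x⟩]
  refine ⟨p, ⟨fun x => hp x ▸ (hpq_mem x).1, fun x hx => ?_⟩,
    q, ⟨fun x => hq x ▸ (hpq_mem x).2, fun x hx => ?_⟩, by linarith⟩
  · have hux : u x = 0 := hu₁ hx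
    have hdist : ρ ≤ |u x - m| := by
      rwa [hux, zero_sub, abs_neg, abs_of_pos (by linarith)]
    rw [hp, if_pos (by linarith), hw_eq x (Or.inl hx) hdist]
  · have hux : u x = 1 := hu₂ hx
    have hdist : ρ ≤ |u x - m| := by rw [hux, abs_of_pos (by linarith)]; linarith
    rw [hq, if_neg (by linarith), hw_eq x (Or.inr hx) hdist]

end Admissible

section Zeta

variable {n : ℕ} {V : C(Sph n, ℝ) → ℝ} {lam : ℝ} {K K₁ K₂ : Set (Sph n)}

theorem zeta_le (hpos : ∀ f : C(Sph n, ℝ), 0 ≤ f → 0 ≤ V f) {f : C(Sph n, ℝ)}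
    (hf : f ∈ admissible lam K) : zeta V lam K ≤ V f :=
  csInf_le ⟨0, forall_mem_image.2 fun _ hg => hpos _ (nonneg_of_mem_admissible hg)⟩
    (mem_image_of_mem V hf)

theorem le_zeta (hlam : 0 ≤ lam) {c : ℝ} (h : ∀ f ∈ admissible lam K, c ≤ V f) :
    c ≤ zeta V lam K :=
  le_csInf ((nonempty_of_mem (const_mem_admissible hlam)).image V) (forall_mem_image.2 h)

theorem zeta_nonneg (hpos : ∀ f : C(Sph n, ℝ), 0 ≤ f → 0 ≤ V f) (hlam : 0 ≤ lam) :
    0 ≤ zeta V lam K :=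
  le_zeta hlam fun f hf => hpos f (nonneg_of_mem_admissible hf)

theorem zeta_mono (hpos : ∀ f : C(Sph n, ℝ), 0 ≤ f → 0 ≤ V f) (hlam : 0 ≤ lam)
    (h : K₁ ⊆ K₂) : zeta V lam K₁ ≤ zeta V lam K₂ :=
  le_zeta hlam fun _ hf => zeta_le hpos (admissible_anti h hf)

theorem zeta_union_le (hpos : ∀ f : C(Sph n, ℝ), 0 ≤ f → 0 ≤ V f)
    (hval : ∀ f g : C(Sph n, ℝ), 0 ≤ f → 0 ≤ g → V (f ⊔ g) + V (f ⊓ g) = V f + V g)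
    (hlam : 0 ≤ lam) : zeta V lam (K₁ ∪ K₂) ≤ zeta V lam K₁ + zeta V lam K₂ := by
  suffices h : ∀ f₁ ∈ admissible lam K₁, ∀ f₂ ∈ admissible lam K₂,
      zeta V lam (K₁ ∪ K₂) ≤ V f₁ + V f₂ by
    have h₁ : ∀ f₂ ∈ admissible lam K₂, zeta V lam (K₁ ∪ K₂) - V f₂ ≤ zeta V lam K₁ :=
      fun f₂ hf₂ => le_zeta hlam fun f₁ hf₁ => sub_le_iff_le_add.2 (h f₁ hf₁ f₂ hf₂)
    have h₂ : zeta V lam (K₁ ∪ K₂) - zeta V lam K₁ ≤ zeta V lam K₂ :=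
      le_zeta hlam fun f₂ hf₂ => by linarith [h₁ f₂ hf₂]
    linarith
  intro f₁ hf₁ f₂ hf₂
  have hf₁0 := nonneg_of_mem_admissible hf₁
  have hf₂0 := nonneg_of_mem_admissible hf₂
  linarith [zeta_le hpos (sup_mem_admissible_union hf₁ hf₂), hval f₁ f₂ hf₁0 hf₂0,
    hpos _ (le_inf hf₁0 hf₂0)]

theorem zeta_union_of_disjoint (hpos : ∀ f : C(Sph n, ℝ), 0 ≤ f → 0 ≤ V f)
    (hval : ∀ f g : C(Sph n, ℝ), 0 ≤ f → 0 ≤ g → V (f ⊔ g) + V (f ⊓ g) = V f + V g)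
    (hcont : ContinuousOn V {f : C(Sph n, ℝ) | 0 ≤ f}) (hzero : V 0 = 0) (hlam : 0 ≤ lam)
    (hK₁ : IsClosed K₁) (hK₂ : IsClosed K₂) (hd : Disjoint K₁ K₂) :
    zeta V lam (K₁ ∪ K₂) = zeta V lam K₁ + zeta V lam K₂ := by
  refine (zeta_union_le hpos hval hlam).antisymm (le_zeta hlam fun f hf => ?_)
  obtain ⟨C, hC⟩ := exists_forall_valuation_le_of_mem_Icc hpos hval hcont hlam
  refine le_of_forall_pos_le_add fun ε hε => ?_
  obtain ⟨p, hp, q, hq, hpq⟩ :=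
    exists_admissible_split hpos hval hzero hlam hC hK₁ hK₂ hd hf hε
  linarith [zeta_le hpos hp, zeta_le hpos hq]

end Zeta

theorem stmt13_general {n : ℕ} (V : C(Sph n, ℝ) → ℝ)
    (hpos : ∀ f : C(Sph n, ℝ), 0 ≤ f → 0 ≤ V f)
    (hval : ∀ f g : C(Sph n, ℝ), 0 ≤ f → 0 ≤ g →
      V (f ⊔ g) + V (f ⊓ g) = V f + V g)
    (hcont : ContinuousOn V {f : C(Sph n, ℝ) | 0 ≤ f})
    (hzero : V 0 = 0) (lam : ℝ) (hlam : 0 < lam) :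
    (∀ K : Set (Sph n), IsCompact K →
      0 ≤ zeta V lam K ∧ zeta V lam K ≤ V (ContinuousMap.const (Sph n) lam)) ∧
    (∀ K₁ K₂ : Set (Sph n), IsCompact K₁ → IsCompact K₂ → K₁ ⊆ K₂ →
      zeta V lam K₁ ≤ zeta V lam K₂) ∧
    (∀ K₁ K₂ : Set (Sph n), IsCompact K₁ → IsCompact K₂ →
      zeta V lam (K₁ ∪ K₂) ≤ zeta V lam K₁ + zeta V lam K₂) ∧
    (∀ K₁ K₂ : Set (Sph n), IsCompact K₁ → IsCompact K₂ → Disjoint K₁ K₂ →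
      zeta V lam (K₁ ∪ K₂) = zeta V lam K₁ + zeta V lam K₂) :=
  ⟨fun _ _ => ⟨zeta_nonneg hpos hlam.le, zeta_le hpos (const_mem_admissible hlam.le)⟩,
    fun _ _ _ _ h => zeta_mono hpos hlam.le h,
    fun _ _ _ _ => zeta_union_le hpos hval hlam.le,
    fun _ _ hK₁ hK₂ hd =>
      zeta_union_of_disjoint hpos hval hcont hzero hlam.le hK₁.isClosed hK₂.isClosed hd⟩

/-- `ζ_λ` is a content: nonnegative, finite (bounded by `V(λ𝟙)`),
monotone, subadditive, and additive on disjoint compact sets. -/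
theorem stmt13 {n : ℕ} (hn : 2 ≤ n) (V : C(Sph n, ℝ) → ℝ)
    (hpos : ∀ f : C(Sph n, ℝ), 0 ≤ f → 0 ≤ V f)
    (hval : ∀ f g : C(Sph n, ℝ), 0 ≤ f → 0 ≤ g →
      V (f ⊔ g) + V (f ⊓ g) = V f + V g)
    (hcont : ContinuousOn V {f : C(Sph n, ℝ) | 0 ≤ f})
    (hrot : ∀ φ : EuclideanSpace ℝ (Fin n) ≃ₗᵢ[ℝ] EuclideanSpace ℝ (Fin n), IsRotation φ →
      ∀ f : C(Sph n, ℝ), 0 ≤ f → V (f.comp (rotMap φ)) = V f)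
    (hzero : V 0 = 0) (lam : ℝ) (hlam : 0 < lam) :
    (∀ K : Set (Sph n), IsCompact K →
      0 ≤ zeta V lam K ∧ zeta V lam K ≤ V (ContinuousMap.const (Sph n) lam)) ∧
    (∀ K₁ K₂ : Set (Sph n), IsCompact K₁ → IsCompact K₂ → K₁ ⊆ K₂ →
      zeta V lam K₁ ≤ zeta V lam K₂) ∧
    (∀ K₁ K₂ : Set (Sph n), IsCompact K₁ → IsCompact K₂ →
      zeta V lam (K₁ ∪ K₂) ≤ zeta V lam K₁ + zeta V lam K₂) ∧
    (∀ K₁ K₂ : Set (Sph n), IsCompact K₁ → IsCompact K₂ → Disjoint K₁ K₂ →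
      zeta V lam (K₁ ∪ K₂) = zeta V lam K₁ + zeta V lam K₂) :=
  stmt13_general V hpos hval hcont hzero lam hlam
end
end

section
/- Let Ṽ : C(S^{n-1})⁺ → [0,∞) be a positive, rotation invariant, radial continuous valuation with Ṽ(0) = 0, let λ > 0, and suppose ϑ_λ > 0 is a constant such that Ṽ(g) ≤ ϑ_λ · m(U) for every open set U ⊆ S^{n-1} and every g ∈ C(S^{n-1})⁺ with ‖g‖_∞ ≤ λ and supp(g) ⊆ U. Define ζ_λ(K) = inf{Ṽ(f) : f : S^{n-1} → [0,λ] continuous, f = λ on K} for compact K. Then for every compact set K ⊆ S^{n-1}, every ε > 0, every open set G ⊇ K with m(G \ K) ≤ ε/(4ϑ_λ), and every continuous f : S^{n-1} → [0,λ] with f = λ on K and supp(f) ⊆ G, one has Ṽ(f) ≤ ζ_λ(K) + ε. -/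
/-!
Compare `f` with an arbitrary competitor `h` for `ζ_λ(K)`. Since `f = h = λ` on `K` and `f`
vanishes off `G`, the two differ by a definite amount only inside `G \ K`. Cutting `h` off where
it does not exceed `f` by `δ` gives `w` with `f ⊔ w` uniformly close to `f ⊔ h` and `f ⊓ w`
supported in `G \ K`, so the valuation identity gives
`V f ≤ V (f ⊔ w) + V (f ⊓ w) ≤ V (f ⊔ h) + ϑ_λ m(G \ K) + o(1)`. Symmetrically
`V (f ⊔ h) ≤ V h + ϑ_λ m(G \ K) + o(1)`, and continuity of `V` at `f ⊔ h` removes the errors.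
-/

open MeasureTheory Metric Set
open scoped ENNReal

noncomputable section

theorem Function.support_inf_of_nonneg {X α : Type*} [Zero α] [LinearOrder α] {f g : X → α}
    (hf : 0 ≤ f) (hg : 0 ≤ g) :
    Function.support (f ⊓ g) = Function.support f ∩ Function.support g := by
  ext x
  simp only [Function.mem_support, Pi.inf_apply, mem_inter_iff, ne_eq]
  rcases le_total (f x) (g x) with hx | hx
  · rw [inf_eq_left.2 hx]
    exact ⟨fun h0 => ⟨h0, fun hg0 => h0 (le_antisymm (hg0 ▸ hx) (hf x))⟩, And.left⟩
  · rw [inf_eq_right.2 hx]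
    exact ⟨fun h0 => ⟨fun hf0 => h0 (le_antisymm (hf0 ▸ hx) (hg x)), h0⟩, And.right⟩

-- The margin `δ` is what keeps the closure of the support of `g` away from `K`.
theorem tsupport_subset_sdiff_of_support_subset {X : Type*} [TopologicalSpace X]
    {f g p q : X → ℝ} {G K : Set X} {δ : ℝ} (hp : Continuous p) (hq : Continuous q)
    (hδ : 0 < δ) (hfG : tsupport f ⊆ G) (hpq : EqOn p q K)
    (hgf : Function.support g ⊆ Function.support f)
    (hgpq : Function.support g ⊆ {x | p x + δ < q x}) :
    tsupport g ⊆ G \ K := by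
  have hclosed : IsClosed (tsupport f ∩ {x | p x + δ ≤ q x}) :=
    (isClosed_tsupport f).inter (isClosed_le (hp.add continuous_const) hq)
  have hsub : Function.support g ⊆ tsupport f ∩ {x | p x + δ ≤ q x} :=
    subset_inter (hgf.trans subset_closure) fun x hx => mem_ofPred.2 (mem_ofPred.1 (hgpq hx)).le
  refine (closure_minimal hsub hclosed).trans ?_
  rintro x ⟨hxf, hx⟩
  exact ⟨hfG hxf, fun hxK => by rw [mem_ofPred, hpq hxK] at hx; linarith⟩

namespace ContinuousMap

variable {X : Type*} [TopologicalSpace X] [CompactSpace X]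

theorem exists_cutoff_sup_dist_le (a b : C(X, ℝ)) {lam δ : ℝ} (hδ : 0 < δ)
    (hb : ∀ x, b x ∈ Icc 0 lam) :
    ∃ w : C(X, ℝ), 0 ≤ w ∧ w ≤ b ∧ Function.support w ⊆ {x | a x + δ < b x} ∧
      dist (a ⊔ w) (a ⊔ b) ≤ 2 * δ := by
  -- The slope `lam / δ` makes the cut-off reach `b` wherever `b ≥ a + 2δ`.
  obtain ⟨w, hw⟩ : ∃ w : C(X, ℝ), ∀ x, w x = max (min (b x) (lam / δ * (b x - a x - δ))) 0 :=
    ⟨(b ⊓ (lam / δ) • (b - a - const X δ)) ⊔ 0, fun _ => rfl⟩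
  have hslope x : 0 ≤ lam / δ := div_nonneg ((hb x).1.trans (hb x).2) hδ.le
  have hwb x : w x ≤ b x := (hw x).trans_le (max_le (min_le_left _ _) (hb x).1)
  have hfar x (hx : a x + 2 * δ ≤ b x) : w x = b x := by
    have : b x ≤ lam / δ * (b x - a x - δ) := calc
      b x ≤ lam / δ * δ := by rw [div_mul_cancel₀ lam hδ.ne']; exact (hb x).2
      _ ≤ lam / δ * (b x - a x - δ) := by gcongr; exacts [hslope x, by linarith]
    rw [hw, min_eq_left this, max_eq_left (hb x).1]
  refine ⟨w, fun x => (le_max_right _ _).trans_eq (hw x).symm, hwb, fun x hx => ?_,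
    (dist_le (by positivity)).2 fun x => ?_⟩
  · by_contra! hle
    refine hx ((hw x).trans (max_eq_right (min_le_of_right_le ?_)))
    exact mul_nonpos_of_nonneg_of_nonpos (hslope x) (by rw [mem_ofPred] at hle; linarith)
  · rw [Real.dist_eq, abs_sub_le_iff, sup_apply, sup_apply]
    refine ⟨by linarith [max_le_max_left (a x) (hwb x)], ?_⟩
    rcases le_total (a x + 2 * δ) (b x) with hx | hx
    · rw [hfar x hx]; linarith
    · linarith [max_le (show a x ≤ a x + 2 * δ by linarith) hx, le_max_left (a x) (w x)]

theorem le_add_of_eqOn_of_tsupport_subset {V : C(X, ℝ) → ℝ}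
    (hpos : ∀ f, 0 ≤ f → 0 ≤ V f)
    (hval : ∀ f g : C(X, ℝ), 0 ≤ f → 0 ≤ g → V (f ⊔ g) + V (f ⊓ g) = V f + V g)
    (hcont : ContinuousOn V {f | 0 ≤ f}) {lam η : ℝ} {G K : Set X}
    (hsmall : ∀ g : C(X, ℝ), 0 ≤ g → (∀ x, g x ≤ lam) → tsupport g ⊆ G \ K → V g ≤ η)
    {f h : C(X, ℝ)} (hf : ∀ x, f x ∈ Icc 0 lam) (hh : ∀ x, h x ∈ Icc 0 lam)
    (hfG : tsupport f ⊆ G) (hfh : EqOn f h K) : V f ≤ V h + 2 * η := by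
  have hf0 : 0 ≤ f := fun x => (hf x).1
  have hh0 : 0 ≤ h := fun x => (hh x).1
  refine le_of_forall_pos_le_add fun ρ hρ => ?_
  obtain ⟨δ, hδ, hclose⟩ := Metric.continuousWithinAt_iff.1
    (hcont (f ⊔ h) (hf0.trans le_sup_left)) (ρ / 2) (half_pos hρ)
  have hnear {g : C(X, ℝ)} (hg : 0 ≤ g) (hd : dist g (f ⊔ h) ≤ 2 * (δ / 4)) :
      |V g - V (f ⊔ h)| < ρ / 2 := by
    rw [← Real.dist_eq]; exact hclose hg (by linarith)
  have hδ4 : 0 < δ / 4 := by positivity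
  obtain ⟨w₁, hw₁0, -, hw₁supp, hw₁dist⟩ := exists_cutoff_sup_dist_le f h hδ4 hh
  obtain ⟨w₂, hw₂0, hw₂f, hw₂supp, hw₂dist⟩ := exists_cutoff_sup_dist_le h f hδ4 hf
  have hV₁ : V (f ⊓ w₁) ≤ η := by
    have hsupp := Function.support_inf_of_nonneg (f := ⇑f) hf0 hw₁0
    refine hsmall _ (le_inf hf0 hw₁0) (fun x => inf_le_left.trans (hf x).2) ?_
    exact tsupport_subset_sdiff_of_support_subset f.continuous h.continuous hδ4 hfG hfh
      (hsupp.trans_subset inter_subset_left)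
      (hsupp.trans_subset (inter_subset_right.trans hw₁supp))
  have hV₂ : V w₂ ≤ η := by
    refine hsmall _ hw₂0 (fun x => (hw₂f x).trans (hf x).2) ?_
    refine tsupport_subset_sdiff_of_support_subset h.continuous f.continuous hδ4 hfG hfh.symm
      (fun x hx => ?_) hw₂supp
    exact ne_of_gt (by linarith [mem_ofPred.1 (hw₂supp hx), (hh x).1])
  have hnear₁ := abs_lt.1 (hnear (hf0.trans le_sup_left) hw₁dist)
  have hnear₂ := abs_lt.1 (hnear (hh0.trans le_sup_left) (by rwa [sup_comm f h]))
  linarith [hval f w₁ hf0 hw₁0, hval h w₂ hh0 hw₂0, hpos w₁ hw₁0, hpos _ (le_inf hh0 hw₂0)]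

end ContinuousMap

theorem le_zeta_s15 {n : ℕ} {V : C(Sph n, ℝ) → ℝ} {lam c : ℝ} {K : Set (Sph n)} (hlam : 0 ≤ lam)
    (h : ∀ g : C(Sph n, ℝ), (∀ x, g x ∈ Icc 0 lam) → (∀ x ∈ K, g x = lam) → c ≤ V g) :
    c ≤ zeta V lam K := by
  refine le_csInf ⟨V (ContinuousMap.const _ lam), mem_image_of_mem V ?_⟩ ?_
  · exact ⟨fun _ => ⟨hlam, le_rfl⟩, fun _ _ => rfl⟩
  · rintro _ ⟨g, ⟨hg, hgK⟩, rfl⟩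
    exact h g hg hgK

theorem stmt15_general {n : ℕ} (V : C(Sph n, ℝ) → ℝ)
    (hpos : ∀ f : C(Sph n, ℝ), 0 ≤ f → 0 ≤ V f)
    (hval : ∀ f g : C(Sph n, ℝ), 0 ≤ f → 0 ≤ g →
      V (f ⊔ g) + V (f ⊓ g) = V f + V g)
    (hcont : ContinuousOn V {f : C(Sph n, ℝ) | 0 ≤ f})
    (lam : ℝ) (hlam : 0 < lam)
    (θlam : ℝ) (hθlam : 0 < θlam)
    (hbound : ∀ U : Set (Sph n), IsOpen U → ∀ g : C(Sph n, ℝ), 0 ≤ g → ‖g‖ ≤ lam →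
      tsupport ⇑g ⊆ U → V g ≤ θlam * (sphMeasure n U).toReal)
    (K : Set (Sph n)) (hK : IsCompact K) (ε : ℝ) (hε : 0 < ε)
    (G : Set (Sph n)) (hG : IsOpen G)
    (hm : (sphMeasure n (G \ K)).toReal ≤ ε / (4 * θlam))
    (f : C(Sph n, ℝ)) (hf0 : ∀ x, f x ∈ Set.Icc 0 lam)
    (hfK : ∀ x ∈ K, f x = lam) (hfG : tsupport ⇑f ⊆ G) :
    V f ≤ zeta V lam K + ε := by
  have hsmall (g : C(Sph n, ℝ)) (hg : 0 ≤ g) (hgl : ∀ x, g x ≤ lam)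
      (hgK : tsupport g ⊆ G \ K) : V g ≤ ε / 4 := by
    have hnorm : ‖g‖ ≤ lam := (ContinuousMap.norm_le _ hlam.le).2 fun x =>
      (Real.norm_of_nonneg (hg x)).trans_le (hgl x)
    calc V g ≤ θlam * (sphMeasure n (G \ K)).toReal :=
          hbound _ (hG.sdiff hK.isClosed) g hg hnorm hgK
      _ ≤ θlam * (ε / (4 * θlam)) := by gcongr
      _ = ε / 4 := by field_simp
  suffices V f - ε ≤ zeta V lam K by linarith
  refine le_zeta_s15 hlam.le fun h hh hhK => ?_
  have := ContinuousMap.le_add_of_eqOn_of_tsupport_subset hpos hval hcont hsmall hf0 hh hfG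
    fun x hx => (hfK x hx).trans (hhK x hx).symm
  linarith

/-- if `m(G \ K) ≤ ε/(4ϑ_λ)` and `f : S^{n-1} → [0,λ]` equals `λ` on the
compact set `K` and is supported in the open set `G ⊇ K`, then `V(f) ≤ ζ_λ(K) + ε`
(by the paper's construction `ζ_λ(K) = ν_λ(K)`). -/
theorem stmt15 {n : ℕ} (hn : 2 ≤ n) (V : C(Sph n, ℝ) → ℝ)
    (hpos : ∀ f : C(Sph n, ℝ), 0 ≤ f → 0 ≤ V f)
    (hval : ∀ f g : C(Sph n, ℝ), 0 ≤ f → 0 ≤ g →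
      V (f ⊔ g) + V (f ⊓ g) = V f + V g)
    (hcont : ContinuousOn V {f : C(Sph n, ℝ) | 0 ≤ f})
    (hrot : ∀ φ : EuclideanSpace ℝ (Fin n) ≃ₗᵢ[ℝ] EuclideanSpace ℝ (Fin n), IsRotation φ →
      ∀ f : C(Sph n, ℝ), 0 ≤ f → V (f.comp (rotMap φ)) = V f)
    (hzero : V 0 = 0) (lam : ℝ) (hlam : 0 < lam)
    (θlam : ℝ) (hθlam : 0 < θlam)
    (hbound : ∀ U : Set (Sph n), IsOpen U → ∀ g : C(Sph n, ℝ), 0 ≤ g → ‖g‖ ≤ lam →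
      tsupport ⇑g ⊆ U → V g ≤ θlam * (sphMeasure n U).toReal)
    (K : Set (Sph n)) (hK : IsCompact K) (ε : ℝ) (hε : 0 < ε)
    (G : Set (Sph n)) (hG : IsOpen G) (hKG : K ⊆ G)
    (hm : (sphMeasure n (G \ K)).toReal ≤ ε / (4 * θlam))
    (f : C(Sph n, ℝ)) (hf0 : ∀ x, f x ∈ Set.Icc 0 lam)
    (hfK : ∀ x ∈ K, f x = lam) (hfG : tsupport ⇑f ⊆ G) :
    V f ≤ zeta V lam K + ε :=
  stmt15_general V hpos hval hcont lam hlam θlam hθlam hbound K hK ε hε G hG hm f hf0 hfK hfG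
end
end
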